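/- Let (G₂,σ₂) be a properly 2-colored digraph with vertex set V₂, let ℓ ≥ 3, and let (G_ℓ,σ_ℓ) be obtained from (G₂,σ₂) by adding ℓ−2 new vertices with pairwise distinct colors not occurring in σ₂(V₂), each made a hub-vertex (i.e., with arcs in both directions to every other vertex of G_ℓ). Then, for each modification operation ⊙ ∈ {deletion −, completion +, editing △} and every integer k, there exists an arc set F₂ over V₂ with |F₂| ≤ k such that (G₂ ⊙ F₂, σ₂) is a best match graph if and only if there exists an arc set F over V(G_ℓ) with |F| ≤ k such that (G_ℓ ⊙ F, σ_ℓ) is a best match graph. -/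

import Mathlib

/-- A rooted (phylogenetic) tree on leaf set `V`, encoded by its hierarchy of
clusters `L(T(v))`, `v ∈ V(T)`: a rooted tree on leaf set `V` corresponds
exactly to a family of nonempty, pairwise compatible subsets of `V` containing
all singletons and `V` itself.  Together with a coloring `σ : V → M` this is a
leaf-colored tree. -/
structure PhyloTree (V : Type) where
  clusters : Set (Set V)
  compat : ∀ p ∈ clusters, ∀ q ∈ clusters, p ⊆ q ∨ q ⊆ p ∨ p ∩ q = ∅
  singleton_mem : ∀ v : V, {v} ∈ clusters
  univ_mem : Set.univ ∈ clusters
  nonempty_mem : ∀ p ∈ clusters, p.Nonempty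

namespace PhyloTree

variable {V M : Type}

/-- The cluster `L(T(lca(x,y)))` of the last common ancestor of `x` and `y`;
for inner vertices `u,v` of a tree one has `u ⪯_T v ↔ L(T(u)) ⊆ L(T(v))`. -/
def lcaSet (T : PhyloTree V) (x y : V) : Set V :=
  ⋂₀ {p : Set V | p ∈ T.clusters ∧ x ∈ p ∧ y ∈ p}

/-- `T` displays the triple `xy|z`, i.e. `lca(x,y) ≺ lca(x,z) = lca(y,z)`. -/
def Displays (T : PhyloTree V) (x y z : V) : Prop :=
  T.lcaSet x y ⊂ T.lcaSet x z ∧ T.lcaSet x z = T.lcaSet y z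

/-- `y` is a best match of `x` in the leaf-colored tree `(T,σ)`. -/
def BestMatch (T : PhyloTree V) (σ : V → M) (x y : V) : Prop :=
  σ x ≠ σ y ∧ ∀ y' : V, σ y' = σ y → T.lcaSet x y ⊆ T.lcaSet x y'

end PhyloTree

variable {V M : Type}

/-- `(T,σ)` explains `(G,σ)`, i.e. `(G,σ) = G(T,σ)`. -/
def Explains (T : PhyloTree V) (σ : V → M) (G : V → V → Prop) : Prop :=
  ∀ x y : V, G x y ↔ T.BestMatch σ x y

/-- `(G,σ)` is a best match graph. -/
def IsBMG (G : V → V → Prop) (σ : V → M) : Prop :=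
  ∃ T : PhyloTree V, Explains T σ G

/-- The triple `xy|y'` is informative for `(G,σ)`. -/
def InformativeTriple (G : V → V → Prop) (σ : V → M) (x y y' : V) : Prop :=
  x ≠ y ∧ x ≠ y' ∧ y ≠ y' ∧ σ x ≠ σ y ∧ σ y = σ y' ∧ G x y ∧ ¬ G x y'

/-- The triple `xy|y'` is forbidden for `(G,σ)`. -/
def ForbiddenTriple (G : V → V → Prop) (σ : V → M) (x y y' : V) : Prop :=
  x ≠ y ∧ x ≠ y' ∧ y ≠ y' ∧ σ x ≠ σ y ∧ σ y = σ y' ∧ G x y ∧ G x y'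

/-- `(G,σ)` is sf-colored: `σ` is proper and every vertex has an out-neighbor
of every color present in the graph other than its own. -/
def SfColored (G : V → V → Prop) (σ : V → M) : Prop :=
  (∀ x y : V, G x y → σ x ≠ σ y) ∧
  ∀ (x : V) (s : M), (∃ v : V, σ v = s) → s ≠ σ x → ∃ y : V, σ y = s ∧ G x y

/-- The three arc modification operations: deletion, completion, editing. -/
inductive ModOp
  | del
  | comp
  | edit

/-- The modified arc relation `G ⊙ F` for each modification operation. -/
def applyMod {W : Type} : ModOp → (W → W → Prop) → Finset (W × W) → (W → W → Prop)
  | ModOp.del, E, F => fun u v => E u v ∧ (u, v) ∉ F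
  | ModOp.comp, E, F => fun u v => E u v ∨ (u, v) ∈ F
  | ModOp.edit, E, F => fun u v => (E u v ∧ (u, v) ∉ F) ∨ (¬ E u v ∧ (u, v) ∈ F)

/-- Validity of a modification set `F` for the respective operation:
deletion sets consist of arcs, completion sets of non-arcs (and non-loops),
edit sets of non-loops. -/
def validMod {W : Type} : ModOp → (W → W → Prop) → Finset (W × W) → Prop
  | ModOp.del, E, F => ∀ p ∈ F, E p.1 p.2
  | ModOp.comp, E, F => ∀ p ∈ F, ¬ E p.1 p.2 ∧ p.1 ≠ p.2
  | ModOp.edit, _, F => ∀ p ∈ F, p.1 ≠ p.2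

/-- The graph `G_ℓ` obtained from `G₂` by adding `n` new vertices, each of
which is a hub-vertex. -/
def hubExt {V₂ : Type} (G₂ : V₂ → V₂ → Prop) (n : ℕ) :
    (V₂ ⊕ Fin n) → (V₂ ⊕ Fin n) → Prop
  | Sum.inl a, Sum.inl b => G₂ a b
  | Sum.inl _, Sum.inr _ => True
  | Sum.inr _, Sum.inl _ => True
  | Sum.inr i, Sum.inr j => i ≠ j

/-- The coloring of `G_ℓ`: old vertices keep their color, the `n` new hub
vertices receive pairwise distinct new colors. -/
def hubColor {V₂ M : Type} (σ₂ : V₂ → M) (n : ℕ) : (V₂ ⊕ Fin n) → (M ⊕ Fin n)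
  | Sum.inl v => Sum.inl (σ₂ v)
  | Sum.inr i => Sum.inr i

/-!
Attaching the hub vertices as leaves directly below the root of a tree explaining
`(G₂ ⊙ F₂, σ₂)` yields a tree explaining the hub extension of `G₂ ⊙ F₂`, and that hub extension is
`G_ℓ ⊙ F₂`. Conversely, restricting a tree explaining `(G_ℓ ⊙ F, σ_ℓ)` to `V₂` yields a tree
explaining its induced subgraph on `V₂`: the hub colors differ from all colors of `σ₂`, so the
best matches of `x ∈ V₂` of a color of `σ₂` lie in `V₂`. That subgraph is `G₂ ⊙ F₂` for the part
`F₂` of `F` inside `V₂ × V₂`, which is no larger than `F`.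
-/

open Function

namespace PhyloTree

variable {α β : Type}

lemma mem_lcaSet_right (T : PhyloTree α) (x y : α) : y ∈ T.lcaSet x y :=
  Set.mem_sInter.mpr fun _ hp => hp.2.2

lemma lcaSet_subset {T : PhyloTree α} {x y : α} {p : Set α}
    (hp : p ∈ T.clusters) (hx : x ∈ p) (hy : y ∈ p) : T.lcaSet x y ⊆ p :=
  Set.sInter_subset_of_mem ⟨hp, hx, hy⟩

lemma lcaSet_comm (T : PhyloTree α) (x y : α) : T.lcaSet x y = T.lcaSet y x := by
  simp only [lcaSet, and_comm (a := x ∈ _)]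

lemma lcaSet_subset_lcaSet_of_mem {T : PhyloTree α} {x y z : α} (hz : z ∈ T.lcaSet x y) :
    T.lcaSet x z ⊆ T.lcaSet x y :=
  Set.subset_sInter fun _ ⟨hp, hx, hy⟩ => lcaSet_subset hp hx (lcaSet_subset hp hx hy hz)

lemma bestMatch_of_lcaSet_eq_univ {M : Type} {T : PhyloTree α} {σ : α → M} {x y : α}
    (hne : σ x ≠ σ y) (huniv : ∀ y', σ y' = σ y → T.lcaSet x y' = Set.univ) :
    T.BestMatch σ x y :=
  ⟨hne, fun y' hy' => by rw [huniv y rfl, huniv y' hy']⟩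

/-- The tree on `α ⊕ β` in which the leaves of `β` are children of the root of `T`. -/
def attachAtRoot (T : PhyloTree α) (β : Type) : PhyloTree (α ⊕ β) where
  clusters := {q | q = Set.univ ∨ (∃ j, q = {Sum.inr j}) ∨ ∃ p ∈ T.clusters, q = Sum.inl '' p}
  compat := by
    have singleton_compat : ∀ (w : α ⊕ β) (q : Set (α ⊕ β)),
        {w} ⊆ q ∨ q ⊆ {w} ∨ {w} ∩ q = ∅ := fun w q => by
      by_cases hw : w ∈ q
      · exact Or.inl (Set.singleton_subset_iff.mpr hw)
      · exact Or.inr (Or.inr (Set.singleton_inter_eq_empty.mpr hw))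
    rintro p (rfl | ⟨i, rfl⟩ | ⟨p, hp, rfl⟩) q (rfl | ⟨j, rfl⟩ | ⟨q, hq, rfl⟩)
    all_goals first
      | exact Or.inr (Or.inl (Set.subset_univ _))
      | exact Or.inl (Set.subset_univ _)
      | exact singleton_compat _ _
      | skip
    · rcases singleton_compat (Sum.inr j) (Sum.inl '' p) with h | h | h
      · exact Or.inr (Or.inl h)
      · exact Or.inl h
      · exact Or.inr (Or.inr (Set.inter_comm _ _ ▸ h))
    · rcases T.compat p hp q hq with h | h | h
      · exact Or.inl (Set.image_mono h)
      · exact Or.inr (Or.inl (Set.image_mono h))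
      · exact Or.inr (Or.inr (by rw [← Set.image_inter Sum.inl_injective, h, Set.image_empty]))
  singleton_mem := by
    rintro (v | j)
    · exact Or.inr (Or.inr ⟨{v}, T.singleton_mem v, (Set.image_singleton).symm⟩)
    · exact Or.inr (Or.inl ⟨j, rfl⟩)
  univ_mem := Or.inl rfl
  nonempty_mem := by
    rintro p (rfl | ⟨j, rfl⟩ | ⟨p, hp, rfl⟩)
    · obtain ⟨a, -⟩ := T.nonempty_mem _ T.univ_mem
      exact ⟨Sum.inl a, trivial⟩
    · exact Set.singleton_nonempty _
    · exact (T.nonempty_mem p hp).image _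

lemma image_inl_mem_attachAtRoot {T : PhyloTree α} {p : Set α} (hp : p ∈ T.clusters) :
    Sum.inl '' p ∈ (T.attachAtRoot β).clusters :=
  Or.inr (Or.inr ⟨p, hp, rfl⟩)

lemma attachAtRoot_lcaSet_inl (T : PhyloTree α) (a b : α) :
    (T.attachAtRoot β).lcaSet (Sum.inl a) (Sum.inl b) = Sum.inl '' T.lcaSet a b := by
  apply subset_antisymm
  · intro z hz
    obtain ⟨c, -, rfl⟩ : z ∈ Sum.inl '' Set.univ := lcaSet_subset
      (image_inl_mem_attachAtRoot T.univ_mem) ⟨a, trivial, rfl⟩ ⟨b, trivial, rfl⟩ hz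
    refine ⟨c, Set.mem_sInter.mpr fun p ⟨hp, ha, hb⟩ => ?_, rfl⟩
    have hc : Sum.inl c ∈ Sum.inl '' p := lcaSet_subset (image_inl_mem_attachAtRoot hp)
      ⟨a, ha, rfl⟩ ⟨b, hb, rfl⟩ hz
    exact Sum.inl_injective.mem_set_image.mp hc
  · rintro _ ⟨c, hc, rfl⟩
    refine Set.mem_sInter.mpr fun q ⟨hq, ha, hb⟩ => ?_
    rcases hq with rfl | ⟨j, rfl⟩ | ⟨p, hp, rfl⟩
    · trivial
    · simp at ha
    · rw [Sum.inl_injective.mem_set_image] at ha hb ⊢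
      exact lcaSet_subset hp ha hb hc

lemma attachAtRoot_lcaSet_inr (T : PhyloTree α) {y : α ⊕ β} {j : β} (hy : y ≠ Sum.inr j) :
    (T.attachAtRoot β).lcaSet y (Sum.inr j) = Set.univ := by
  refine Set.eq_univ_of_forall fun z => Set.mem_sInter.mpr fun q ⟨hq, hyq, hjq⟩ => ?_
  rcases hq with rfl | ⟨i, rfl⟩ | ⟨p, hp, rfl⟩
  · trivial
  · exact absurd ((Set.mem_singleton_iff.mp hyq).trans (Set.mem_singleton_iff.mp hjq).symm) hy
  · simp at hjq

section BestMatch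

variable {M N : Type} (T : PhyloTree α) (σ : α → M) (τ : β → N)

lemma attachAtRoot_bestMatch_inl_inl (a b : α) :
    (T.attachAtRoot β).BestMatch (Sum.map σ τ) (Sum.inl a) (Sum.inl b) ↔ T.BestMatch σ a b := by
  simp only [BestMatch, Sum.forall, Sum.map_inl, Sum.map_inr, ne_eq, Sum.inl.injEq,
    reduceCtorEq, IsEmpty.forall_iff, implies_true, and_true, attachAtRoot_lcaSet_inl,
    Set.image_subset_image_iff Sum.inl_injective]

lemma attachAtRoot_bestMatch_inl_inr (a : α) (j : β) :
    (T.attachAtRoot β).BestMatch (Sum.map σ τ) (Sum.inl a) (Sum.inr j) :=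
  bestMatch_of_lcaSet_eq_univ (by simp) fun y' _ => by
    rcases y' with a' | j'
    · simp at *
    · exact attachAtRoot_lcaSet_inr T (by simp)

lemma attachAtRoot_bestMatch_inr_inl (i : β) (b : α) :
    (T.attachAtRoot β).BestMatch (Sum.map σ τ) (Sum.inr i) (Sum.inl b) :=
  bestMatch_of_lcaSet_eq_univ (by simp) fun y' _ => by
    rcases y' with a' | j'
    · rw [lcaSet_comm]; exact attachAtRoot_lcaSet_inr T (by simp)
    · simp at *

lemma attachAtRoot_bestMatch_inr_inr (i j : β) :
    (T.attachAtRoot β).BestMatch (Sum.map σ τ) (Sum.inr i) (Sum.inr j) ↔ τ i ≠ τ j := by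
  refine ⟨fun h => by simpa using h.1, fun hne => bestMatch_of_lcaSet_eq_univ (by simpa) ?_⟩
  rintro (a' | j') hj'
  · simp at hj'
  · rw [lcaSet_comm]
    exact attachAtRoot_lcaSet_inr T fun h => hne (by simp_all)

end BestMatch

def comap [Nonempty α] (T : PhyloTree β) (f : α → β) (hf : Injective f) : PhyloTree α where
  clusters := {q | q.Nonempty ∧ ∃ p ∈ T.clusters, q = f ⁻¹' p}
  compat := by
    rintro _ ⟨-, p, hp, rfl⟩ _ ⟨-, q, hq, rfl⟩
    rcases T.compat p hp q hq with h | h | h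
    · exact Or.inl (Set.preimage_mono h)
    · exact Or.inr (Or.inl (Set.preimage_mono h))
    · exact Or.inr (Or.inr (by rw [← Set.preimage_inter, h, Set.preimage_empty]))
  singleton_mem v := ⟨Set.singleton_nonempty v, {f v}, T.singleton_mem _,
    by rw [← Set.image_singleton, hf.preimage_image]⟩
  univ_mem := ⟨Set.univ_nonempty, Set.univ, T.univ_mem, rfl⟩
  nonempty_mem _ hp := hp.1

lemma comap_lcaSet [Nonempty α] (T : PhyloTree β) {f : α → β} (hf : Injective f) (a b : α) :
    (T.comap f hf).lcaSet a b = f ⁻¹' T.lcaSet (f a) (f b) := by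
  ext x
  simp only [lcaSet, comap, Set.mem_preimage, Set.mem_sInter]
  constructor
  · exact fun h p ⟨hp, ha, hb⟩ => h (f ⁻¹' p) ⟨⟨⟨a, ha⟩, p, hp, rfl⟩, ha, hb⟩
  · rintro h _ ⟨⟨-, p, hp, rfl⟩, ha, hb⟩
    exact h p ⟨hp, ha, hb⟩

end PhyloTree

open PhyloTree

section BMG

variable {α β M N : Type}

lemma IsBMG.congr {σ : α → M} {G G' : α → α → Prop} (hG : IsBMG G σ)
    (h : ∀ x y, G x y ↔ G' x y) : IsBMG G' σ := by
  obtain ⟨T, hT⟩ := hG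
  exact ⟨T, fun x y => (h x y).symm.trans (hT x y)⟩

lemma hubColor_eq_sumMap (σ : α → M) (n : ℕ) : hubColor σ n = Sum.map σ id := by
  funext x; cases x <;> rfl

lemma IsBMG.hubExt {G : α → α → Prop} {σ : α → M} (hG : IsBMG G σ) (n : ℕ) :
    IsBMG (hubExt G n) (hubColor σ n) := by
  obtain ⟨T, hT⟩ := hG
  refine ⟨T.attachAtRoot (Fin n), ?_⟩
  rw [hubColor_eq_sumMap]
  rintro (a | i) (b | j)
  · exact (hT a b).trans (attachAtRoot_bestMatch_inl_inl T σ id a b).symm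
  · exact iff_of_true trivial (attachAtRoot_bestMatch_inl_inr T σ id a j)
  · exact iff_of_true trivial (attachAtRoot_bestMatch_inr_inl T σ id i b)
  · exact (attachAtRoot_bestMatch_inr_inr T σ id i j).symm

/-- The colors `Sum.inr _` of `β` are disjoint from those of `α`, so a BMG restricts to `α`. -/
lemma IsBMG.restrict_inl [Nonempty α] {G : α ⊕ β → α ⊕ β → Prop} {σ : α → M} {τ : β → N}
    (hG : IsBMG G (Sum.map σ τ)) : IsBMG (fun a b => G (Sum.inl a) (Sum.inl b)) σ := by
  obtain ⟨T, hT⟩ := hG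
  refine ⟨T.comap Sum.inl Sum.inl_injective, fun a b => (hT _ _).trans ?_⟩
  simp only [BestMatch, comap_lcaSet, Sum.forall, Sum.map_inl, Sum.map_inr, ne_eq,
    Sum.inl.injEq, reduceCtorEq, IsEmpty.forall_iff, implies_true, and_true]
  refine and_congr_right fun _ => forall₂_congr fun b' _ => ⟨Set.preimage_mono, fun h => ?_⟩
  exact lcaSet_subset_lcaSet_of_mem (h (mem_lcaSet_right T _ _))

end BMG

section Modification

variable {α β : Type}

lemma applyMod_congr (op : ModOp) {E : α → α → Prop} {E' : β → β → Prop}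
    {F : Finset (α × α)} {F' : Finset (β × β)} {a b : α} {u v : β}
    (hE : E a b ↔ E' u v) (hF : (a, b) ∈ F ↔ (u, v) ∈ F') :
    applyMod op E F a b ↔ applyMod op E' F' u v := by
  cases op <;> simp only [applyMod, hE, hF]

lemma applyMod_of_not_mem (op : ModOp) {E : α → α → Prop} {F : Finset (α × α)} {u v : α}
    (huv : (u, v) ∉ F) : applyMod op E F u v ↔ E u v := by
  cases op <;> simp [applyMod, huv]

variable (e : α ↪ β)

lemma validMod_map {op : ModOp} {E : β → β → Prop} {F : Finset (α × α)}
    (hF : validMod op (fun a b => E (e a) (e b)) F) : validMod op E (F.map (e.prodMap e)) := by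
  cases op <;> intro p hp <;> obtain ⟨q, hq, rfl⟩ := Finset.mem_map.mp hp <;>
    simpa [e.injective.eq_iff] using hF q hq

lemma validMod_preimage {op : ModOp} {E : β → β → Prop} {F : Finset (β × β)}
    (hF : validMod op E F) : validMod op (fun a b => E (e a) (e b))
      (F.preimage (e.prodMap e) (e.prodMap e).injective.injOn) := by
  cases op <;> intro p hp <;> simpa [e.injective.eq_iff] using hF _ (Finset.mem_preimage.mp hp)

lemma card_preimage_embedding_le (F : Finset β) :
    (F.preimage e e.injective.injOn).card ≤ F.card :=
  (Finset.card_map e).symm.trans_le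
    (Finset.card_le_card (Finset.map_subset_iff_subset_preimage.mpr subset_rfl))

lemma applyMod_preimage (op : ModOp) (E : β → β → Prop) (F : Finset (β × β)) (a b : α) :
    applyMod op (fun a b => E (e a) (e b))
        (F.preimage (e.prodMap e) (e.prodMap e).injective.injOn) a b ↔
      applyMod op E F (e a) (e b) :=
  applyMod_congr op Iff.rfl Finset.mem_preimage

end Modification

lemma applyMod_hubExt_map {V : Type} (op : ModOp) (G : V → V → Prop) (F : Finset (V × V))
    (n : ℕ) (u v : V ⊕ Fin n) :
    applyMod op (hubExt G n) (F.map (.prodMap .inl .inl)) u v ↔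
      hubExt (applyMod op G F) n u v := by
  rcases u with a | i <;> rcases v with b | j
  · exact applyMod_congr op Iff.rfl (Finset.mem_map' _ (a := (a, b)))
  all_goals exact (applyMod_of_not_mem op (by simp)).trans Iff.rfl

theorem hub_extension_equiv_general {V₂ : Type}
    (G₂ : V₂ → V₂ → Prop) (σ₂ : V₂ → Bool)
    (hsurj : Function.Surjective σ₂)
    (ℓ : ℕ) :
    ∀ (op : ModOp) (k : ℕ),
      (∃ F₂ : Finset (V₂ × V₂),
        validMod op G₂ F₂ ∧ F₂.card ≤ k ∧ IsBMG (applyMod op G₂ F₂) σ₂) ↔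
      (∃ F : Finset ((V₂ ⊕ Fin (ℓ - 2)) × (V₂ ⊕ Fin (ℓ - 2))),
        validMod op (hubExt G₂ (ℓ - 2)) F ∧ F.card ≤ k ∧
        IsBMG (applyMod op (hubExt G₂ (ℓ - 2)) F) (hubColor σ₂ (ℓ - 2))) := by
  intro op k
  have : Nonempty V₂ := hsurj.nonempty
  let e : V₂ ↪ V₂ ⊕ Fin (ℓ - 2) := .inl
  constructor
  · rintro ⟨F₂, hvalid, hcard, hbmg⟩
    refine ⟨F₂.map (e.prodMap e), validMod_map e hvalid, (Finset.card_map _).trans_le hcard, ?_⟩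
    exact (hbmg.hubExt _).congr fun u v => (applyMod_hubExt_map op G₂ F₂ _ u v).symm
  · rintro ⟨F, hvalid, hcard, hbmg⟩
    refine ⟨_, validMod_preimage e hvalid, (card_preimage_embedding_le _ F).trans hcard, ?_⟩
    rw [hubColor_eq_sumMap] at hbmg
    exact hbmg.restrict_inl.congr fun a b => (applyMod_preimage e op _ F a b).symm

/-- For a properly 2-colored digraph `(G₂,σ₂)`, `ℓ ≥ 3`, and the
`ℓ`-colored graph `(G_ℓ,σ_ℓ)` obtained by adding `ℓ-2` hub-vertices with fresh
pairwise distinct colors: for each modification operation `⊙` and every `k`,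
`(G₂,σ₂)` can be modified into a BMG with at most `k` operations iff
`(G_ℓ,σ_ℓ)` can. -/
theorem hub_extension_equiv {V₂ : Type} [Fintype V₂]
    (G₂ : V₂ → V₂ → Prop) (σ₂ : V₂ → Bool)
    (hproper : ∀ x y : V₂, G₂ x y → σ₂ x ≠ σ₂ y)
    (hsurj : Function.Surjective σ₂)
    (ℓ : ℕ) (hℓ : 3 ≤ ℓ) :
    ∀ (op : ModOp) (k : ℕ),
      (∃ F₂ : Finset (V₂ × V₂),
        validMod op G₂ F₂ ∧ F₂.card ≤ k ∧ IsBMG (applyMod op G₂ F₂) σ₂) ↔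
      (∃ F : Finset ((V₂ ⊕ Fin (ℓ - 2)) × (V₂ ⊕ Fin (ℓ - 2))),
        validMod op (hubExt G₂ (ℓ - 2)) F ∧ F.card ≤ k ∧
        IsBMG (applyMod op (hubExt G₂ (ℓ - 2)) F) (hubColor σ₂ (ℓ - 2))) :=
  hub_extension_equiv_general G₂ σ₂ hsurj ℓ
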